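/- arXiv:0912.1711 — 4 statements merged into one kernel-verified Lean document; each statement's English description precedes it below -/
import Mathlib

section
/- Let A be a K-algebra over a field K of characteristic zero, containing elements x, y with x*y − y*x = x. Define w(k,ℓ) = (x*y^k − y^k*x)*x^ℓ. Then for all k ≥ 1 and ℓ ≥ 0, y * w(k,ℓ) = (k/(k+1)) · w(k+1,ℓ) − (1/(k+1)) · ∑_{i=1}^{k} C(k+1,i) · B_{k+1−i} · w(i,ℓ), where B_n are the Bernoulli numbers with B_1 = 1/2. -/
/-!
The relation says `x * y = (y + 1) * x`, hence `x * y ^ n = (y + 1) ^ n * x` and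
`w(n, ℓ) = ((y + 1) ^ n - y ^ n) * x ^ (ℓ + 1)`. The theorem is thus the image under `X ↦ y` of an
identity in `ℚ[X]`. That identity comes from the difference equation of the Bernoulli polynomials:
`P := B_n(1 + X) = ∑ C(n, i) B'_{n-i} X ^ i` satisfies `P(1 + X) - P(X) = n (1 + X) ^ (n - 1)`.
-/

open Finset Polynomial

theorem mul_pow_eq_add_one_pow_mul {A : Type*} [Ring A] {x y : A} (h : x * y - y * x = x)
    (n : ℕ) : x * y ^ n = (y + 1) ^ n * x :=
  SemiconjBy.pow_right (by rw [SemiconjBy, add_one_mul]; exact sub_eq_iff_eq_add'.mp h) n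

namespace Polynomial

theorem bernoulli_comp_one_add_X_eq_sum (n : ℕ) :
    (bernoulli n).comp (1 + X) =
      ∑ i ∈ range (n + 1), (n.choose i * bernoulli' (n - i)) • X ^ i := by
  rw [bernoulli_comp_one_add_X, bernoulli_def, ← eq_sub_iff_add_eq', ← sum_sub_distrib]
  simp only [← smul_X_eq_monomial, ← sub_smul]
  rcases n with _ | n
  · simp
  rw [sum_eq_single n]
  · rw [← Nat.cast_smul_eq_nsmul ℚ]
    simp only [Nat.add_sub_cancel_left, Nat.add_sub_cancel, Nat.choose_succ_self_right,
      bernoulli'_one, _root_.bernoulli_one]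
    congr 1
    ring
  · intro i _ hi
    rw [bernoulli_eq_bernoulli'_of_ne_one (by omega), mul_comm, sub_self, zero_smul]
  · simp

theorem sum_bernoulli'_smul_add_one_pow_sub_pow (n : ℕ) :
    ∑ i ∈ range (n + 1), (n.choose i * bernoulli' (n - i)) • ((X + 1 : ℚ[X]) ^ i - X ^ i) =
      n • (X + 1) ^ (n - 1) := by
  calc _ = (∑ i ∈ range (n + 1), (n.choose i * bernoulli' (n - i)) • X ^ i).comp (1 + X) -
        ∑ i ∈ range (n + 1), (n.choose i * bernoulli' (n - i)) • X ^ i := by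
        simp [sum_comp, smul_comp, smul_sub, sum_sub_distrib, add_comm]
    _ = ((bernoulli n).comp (1 + X)).comp (1 + X) - (bernoulli n).comp (1 + X) := by
        rw [bernoulli_comp_one_add_X_eq_sum]
    _ = n • (X + 1) ^ (n - 1) := by
        rw [congrArg (fun p : ℚ[X] ↦ p.comp (1 + X)) (bernoulli_comp_one_add_X n), add_comp,
          add_sub_cancel_left]
        simp [add_comm]

theorem X_mul_add_one_pow_sub_pow (k : ℕ) :
    (X : ℚ[X]) * ((X + 1) ^ k - X ^ k) =
      ((k : ℚ) / (k + 1)) • ((X + 1) ^ (k + 1) - X ^ (k + 1)) -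
      ((1 : ℚ) / (k + 1)) • ∑ i ∈ Icc 1 k,
        ((k + 1).choose i * bernoulli' (k + 1 - i)) • ((X + 1) ^ i - X ^ i) := by
  have hsum := sum_bernoulli'_smul_add_one_pow_sub_pow (k + 1)
  rw [sum_range_succ, sum_range_eq_add_Ico _ (by omega), Ico_add_one_right_eq_Icc] at hsum
  simp only [Nat.choose_zero_right, Nat.cast_one, tsub_zero, one_mul, pow_zero, sub_self,
    smul_zero, zero_add, Nat.choose_self, tsub_self, bernoulli'_zero, mul_one, one_smul,
    add_tsub_cancel_right] at hsum
  have hdiff : (X + 1 : ℚ[X]) ^ (k + 1) - X ^ (k + 1) =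
      X * ((X + 1) ^ k - X ^ k) + (X + 1) ^ k := by
    ring
  have hk : (k : ℚ) + 1 ≠ 0 := by positivity
  rw [eq_sub_of_add_eq hsum, hdiff]
  match_scalars <;> field_simp <;> ring

end Polynomial

theorem y_mul_w_general (K : Type*) (A : Type*) [Field K] [CharZero K] [Ring A] [Algebra K A]
    (x y : A) (h : x * y - y * x = x) (k ℓ : ℕ) :
    y * ((x * y ^ k - y ^ k * x) * x ^ ℓ) =
      ((k : K) / (k + 1)) • ((x * y ^ (k + 1) - y ^ (k + 1) * x) * x ^ ℓ) -
      ((1 : K) / (k + 1)) • ∑ i ∈ Finset.Icc 1 k,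
        (((k + 1).choose i : K) * algebraMap ℚ K (bernoulli' (k + 1 - i))) •
          ((x * y ^ i - y ^ i * x) * x ^ ℓ) := by
  have hw (i : ℕ) : (x * y ^ i - y ^ i * x) * x ^ ℓ = ((y + 1) ^ i - y ^ i) * x ^ (ℓ + 1) := by
    rw [mul_pow_eq_add_one_pow_mul h, ← sub_mul, mul_assoc, ← pow_succ']
  simp only [hw]
  simpa [sub_mul, smul_mul_assoc, sum_mul, mul_assoc, Polynomial.map_sum, Polynomial.map_smul] using
    congrArg (fun p ↦ aeval y (p.map (algebraMap ℚ K)) * x ^ (ℓ + 1)) (X_mul_add_one_pow_sub_pow k)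

theorem y_mul_w (K : Type*) (A : Type*) [Field K] [CharZero K] [Ring A] [Algebra K A]
    (x y : A) (h : x * y - y * x = x) (k ℓ : ℕ) (hk : 1 ≤ k) :
    y * ((x * y ^ k - y ^ k * x) * x ^ ℓ) =
      ((k : K) / (k + 1)) • ((x * y ^ (k + 1) - y ^ (k + 1) * x) * x ^ ℓ) -
      ((1 : K) / (k + 1)) • ∑ i ∈ Finset.Icc 1 k,
        (((k + 1).choose i : K) * algebraMap ℚ K (bernoulli' (k + 1 - i))) •
          ((x * y ^ i - y ^ i * x) * x ^ ℓ) :=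
  y_mul_w_general K A x y h k ℓ
end

section
/- Let A be a K-algebra over a field K of characteristic zero with elements x, y satisfying x*y − y*x = x, and define w_k = x*y^k − y^k*x. Then for every k ≥ 1: w_k * y = (k/(k+1)) · w_{k+1} − (1/(k+1)) · ∑_{i=1}^{k} (−1)^{k+1−i} C(k+1,i) · B_{k+1−i} · w_i. -/
open Polynomial Finset

/-- Bernoulli polynomial written with `bernoulli'` coefficients and `smul` of `X ^ i`. -/
lemma bern_poly_eq (n : ℕ) :
    Polynomial.bernoulli n =
      ∑ i ∈ Finset.range (n + 1),
        ((-1 : ℚ) ^ (n - i) * (n.choose i : ℚ) * bernoulli' (n - i)) • (X : ℚ[X]) ^ i := by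
  rw [Polynomial.bernoulli_def]
  refine Finset.sum_congr rfl fun i hi => ?_
  rw [← C_mul_X_pow_eq_monomial, ← Polynomial.smul_eq_C_mul]
  congr 1
  rw [_root_.bernoulli]
  ring

lemma bern_comp (n : ℕ) :
    (Polynomial.bernoulli n).comp (X + 1) =
      Polynomial.bernoulli n + (n : ℚ) • X ^ (n - 1) := by
  apply Polynomial.funext
  intro r
  simp only [Polynomial.eval_comp, Polynomial.eval_add, Polynomial.eval_X, Polynomial.eval_one,
    Polynomial.eval_smul, Polynomial.eval_pow, smul_eq_mul]
  rw [add_comm r 1, Polynomial.bernoulli_eval_one_add]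

lemma key_Q (k : ℕ) :
    (X + 1 : ℚ[X]) ^ (k + 1) +
      ∑ i ∈ Finset.Icc 1 k,
        ((-1 : ℚ) ^ (k + 1 - i) * ((k + 1).choose i : ℚ) * bernoulli' (k + 1 - i)) •
          ((X + 1 : ℚ[X]) ^ i - X ^ i)
    = X ^ (k + 1) + ((k : ℚ) + 1) • X ^ k := by
  have hB := bern_comp (k + 1)
  rw [bern_poly_eq (k + 1)] at hB
  have hcomp : ((∑ i ∈ Finset.range (k + 2),
        ((-1 : ℚ) ^ (k + 1 - i) * ((k + 1).choose i : ℚ) * bernoulli' (k + 1 - i)) •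
          (X : ℚ[X]) ^ i).comp (X + 1))
      = ∑ i ∈ Finset.range (k + 2),
        ((-1 : ℚ) ^ (k + 1 - i) * ((k + 1).choose i : ℚ) * bernoulli' (k + 1 - i)) •
          ((X : ℚ[X]) + 1) ^ i := by
    simp only [Polynomial.comp, Polynomial.eval₂_finset_sum, Polynomial.smul_eq_C_mul,
      Polynomial.eval₂_mul, Polynomial.eval₂_C, Polynomial.eval₂_X_pow]
  rw [hcomp] at hB
  have hdiff : ∑ i ∈ Finset.range (k + 2),
      ((-1 : ℚ) ^ (k + 1 - i) * ((k + 1).choose i : ℚ) * bernoulli' (k + 1 - i)) •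
        ((X + 1 : ℚ[X]) ^ i - X ^ i) = ((k : ℚ) + 1) • X ^ k := by
    rw [show (∑ i ∈ Finset.range (k + 2),
        ((-1 : ℚ) ^ (k + 1 - i) * ((k + 1).choose i : ℚ) * bernoulli' (k + 1 - i)) •
          ((X + 1 : ℚ[X]) ^ i - X ^ i))
      = (∑ i ∈ Finset.range (k + 2),
        ((-1 : ℚ) ^ (k + 1 - i) * ((k + 1).choose i : ℚ) * bernoulli' (k + 1 - i)) •
          ((X + 1 : ℚ[X]) ^ i))
      - (∑ i ∈ Finset.range (k + 2),
        ((-1 : ℚ) ^ (k + 1 - i) * ((k + 1).choose i : ℚ) * bernoulli' (k + 1 - i)) •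
          ((X : ℚ[X]) ^ i)) by
        rw [← Finset.sum_sub_distrib]
        exact Finset.sum_congr rfl fun i _ => smul_sub _ _ _]
    rw [hB]
    have : ((k : ℚ) + 1) = ((k + 1 : ℕ) : ℚ) := by push_cast; ring
    rw [this]
    simp
  -- split the range sum
  have hsplit : Finset.range (k + 2) = insert 0 (insert (k + 1) (Finset.Icc 1 k)) := by
    ext n
    simp only [Finset.mem_range, Finset.mem_insert, Finset.mem_Icc]
    omega
  rw [hsplit] at hdiff
  rw [Finset.sum_insert (by simp), Finset.sum_insert (by simp)] at hdiff
  simp only [pow_zero, sub_self, smul_zero, zero_add, Nat.sub_self, pow_zero,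
    Nat.choose_self, Nat.cast_one, bernoulli'_zero, one_mul, mul_one, one_smul] at hdiff
  -- hdiff : (X+1)^(k+1) - X^(k+1) + ∑ ... = (k+1) • X^k
  linear_combination (norm := abel) hdiff

lemma key_K (K : Type*) [Field K] [CharZero K] (k : ℕ) :
    (X + 1 : K[X]) ^ (k + 1) +
      ∑ i ∈ Finset.Icc 1 k,
        ((-1 : K) ^ (k + 1 - i) * ((k + 1).choose i : K) *
          algebraMap ℚ K (bernoulli' (k + 1 - i))) •
          ((X + 1 : K[X]) ^ i - X ^ i)
    = X ^ (k + 1) + ((k : K) + 1) • X ^ k := by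
  have := congrArg (Polynomial.map (algebraMap ℚ K)) (key_Q k)
  rw [← Polynomial.coe_mapRingHom] at this
  simp only [map_add, map_sum] at this
  simp only [Polynomial.coe_mapRingHom] at this
  simpa [Polynomial.map_smul, map_mul, map_pow, map_neg, map_one, map_natCast] using this

lemma key_A (K : Type*) (A : Type*) [Field K] [CharZero K] [Ring A] [Algebra K A]
    (y : A) (k : ℕ) :
    (y + 1 : A) ^ (k + 1) +
      ∑ i ∈ Finset.Icc 1 k,
        ((-1 : K) ^ (k + 1 - i) * ((k + 1).choose i : K) *
          algebraMap ℚ K (bernoulli' (k + 1 - i))) •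
          ((y + 1 : A) ^ i - y ^ i)
    = y ^ (k + 1) + ((k : K) + 1) • y ^ k := by
  have := congrArg (Polynomial.aeval y : K[X] →ₐ[K] A) (key_K K k)
  simpa [map_sum, map_add, map_pow, map_sub, map_smul, Polynomial.aeval_X] using this

theorem wk_mul_y (K : Type*) (A : Type*) [Field K] [CharZero K] [Ring A] [Algebra K A]
    (x y : A) (h : x * y - y * x = x) (k : ℕ) (hk : 1 ≤ k) :
    (x * y ^ k - y ^ k * x) * y =
      ((k : K) / (k + 1)) • (x * y ^ (k + 1) - y ^ (k + 1) * x) -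
      ((1 : K) / (k + 1)) • ∑ i ∈ Finset.Icc 1 k,
        ((-1 : K) ^ (k + 1 - i) * ((k + 1).choose i : K) *
            algebraMap ℚ K (bernoulli' (k + 1 - i))) •
          (x * y ^ i - y ^ i * x) := by
  have hxy : x * y = (y + 1) * x := by
    rw [sub_eq_iff_eq_add] at h
    rw [h]; noncomm_ring
  have hpow : ∀ n : ℕ, x * y ^ n = (y + 1) ^ n * x := by
    intro n
    induction n with
    | zero => simp
    | succ n ih =>
      rw [pow_succ, ← mul_assoc, ih, mul_assoc, hxy, pow_succ, mul_assoc]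
  -- rewrite the sum
  have hsum : ∑ i ∈ Finset.Icc 1 k,
      ((-1 : K) ^ (k + 1 - i) * ((k + 1).choose i : K) *
          algebraMap ℚ K (bernoulli' (k + 1 - i))) • (x * y ^ i - y ^ i * x)
      = (∑ i ∈ Finset.Icc 1 k,
          ((-1 : K) ^ (k + 1 - i) * ((k + 1).choose i : K) *
          algebraMap ℚ K (bernoulli' (k + 1 - i))) • ((y + 1) ^ i - y ^ i)) * x := by
    rw [Finset.sum_mul]
    refine Finset.sum_congr rfl fun i _ => ?_
    rw [hpow, smul_mul_assoc, sub_mul]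
  have hkey : (∑ i ∈ Finset.Icc 1 k,
          ((-1 : K) ^ (k + 1 - i) * ((k + 1).choose i : K) *
          algebraMap ℚ K (bernoulli' (k + 1 - i))) • ((y + 1) ^ i - y ^ i))
      = y ^ (k + 1) + ((k : K) + 1) • y ^ k - (y + 1) ^ (k + 1) := by
    exact eq_sub_of_add_eq' (key_A K A y k)
  rw [hsum, hkey]
  have hne : ((k : K) + 1) ≠ 0 := Nat.cast_add_one_ne_zero k
  calc (x * y ^ k - y ^ k * x) * y
      = ((y + 1) ^ k * x - y ^ k * x) * y := by rw [hpow]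
    _ = (y + 1) ^ k * (x * y) - y ^ k * (x * y) := by noncomm_ring
    _ = (y + 1) ^ k * ((y + 1) * x) - y ^ k * ((y + 1) * x) := by rw [hxy]
    _ = (y + 1) ^ (k + 1) * x - y ^ (k + 1) * x - y ^ k * x := by noncomm_ring
    _ = ((k : K) / (k + 1)) • ((y + 1) ^ (k + 1) * x - y ^ (k + 1) * x) -
        ((1 : K) / (k + 1)) •
          ((y ^ (k + 1) + ((k : K) + 1) • y ^ k - (y + 1) ^ (k + 1)) * x) := by
        rw [sub_mul, add_mul, smul_mul_assoc]
        match_scalars <;> field_simp <;> ring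
  rw [hpow]
end

section
/- Let A be a K-algebra over a field K of characteristic zero with elements x, y satisfying x*y − y*x = x. Then for every k ≥ 1: y*x*y^k = (k/(k+1))·x*y^{k+1} + (1/(k+1))·y^{k+1}*x − (1/(k+1))·∑_{i=1}^{k} C(k+1,i)·B_{k+1−i}·x*y^i + (1/(k+1))·∑_{i=1}^{k} C(k+1,i)·B_{k+1−i}·y^i*x. -/
open Finset

private lemma sumE (k : ℕ) (u : ℚ) :
    ∑ i ∈ Finset.range (k+2), ((k+1).choose i : ℚ) * bernoulli' (k+1-i) * u^i
      = (Polynomial.bernoulli (k+1)).eval u + (k+1)*u^k := by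
  rw [Polynomial.bernoulli_def, Polynomial.eval_finset_sum]
  simp only [Polynomial.eval_monomial]
  rw [← sub_eq_iff_eq_add']
  rw [← Finset.sum_sub_distrib]
  have : ∀ i ∈ Finset.range (k+2),
      ((k+1).choose i : ℚ) * bernoulli' (k+1-i) * u^i - bernoulli (k+1-i) * ((k+1).choose i) * u^i
      = (if i = k then ((k:ℚ)+1)*u^k else 0) := by
    intro i hi
    by_cases hik : i = k
    · subst hik
      simp [bernoulli'_one, bernoulli_one]
      ring
    · rw [if_neg hik]
      have : bernoulli (k+1-i) = bernoulli' (k+1-i) := by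
        apply bernoulli_eq_bernoulli'_of_ne_one
        omega
      rw [this]; ring
  rw [Finset.sum_congr rfl this, Finset.sum_ite_eq' (Finset.range (k+2)) k]
  rw [if_pos (Finset.mem_range.2 (by omega))]

private lemma sumIcc (k : ℕ) (t : ℚ) :
    ∑ i ∈ Finset.Icc 1 k, ((k+1).choose i : ℚ) * bernoulli' (k+1-i) * ((t+1)^i - t^i)
      = (k+1)*(t+1)^k - (t+1)^(k+1) + t^(k+1) := by
  have e1 : Finset.range (k+2) = insert 0 (Finset.Icc 1 (k+1)) := by
    ext i; simp [Finset.mem_range, Finset.mem_Icc]; omega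
  have e2 : ∑ i ∈ Finset.range (k+2), ((k+1).choose i : ℚ) * bernoulli' (k+1-i) * ((t+1)^i - t^i)
      = (∑ i ∈ Finset.Icc 1 k, ((k+1).choose i : ℚ) * bernoulli' (k+1-i) * ((t+1)^i - t^i))
        + ((t+1)^(k+1) - t^(k+1)) := by
    rw [e1, Finset.sum_insert (by simp), Finset.sum_Icc_succ_top (by omega)]
    simp [bernoulli'_zero]
  have e3 : ∑ i ∈ Finset.range (k+2), ((k+1).choose i : ℚ) * bernoulli' (k+1-i) * ((t+1)^i - t^i)
      = (k+1)*(t+1)^k := by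
    simp_rw [mul_sub, Finset.sum_sub_distrib]
    rw [sumE, sumE]
    have := Polynomial.bernoulli_eval_one_add (k+1) t
    rw [show (1:ℚ) + t = t + 1 by ring] at this
    rw [this]
    push_cast
    ring_nf
  rw [e2] at e3
  linarith

open Polynomial in
private lemma polyId (k : ℕ) :
    ((k:ℚ)+1) • ((X:Polynomial ℚ) * (X+1)^k)
    = (k:ℚ) • ((X:Polynomial ℚ)+1)^(k+1) + (X:Polynomial ℚ)^(k+1)
      - ∑ i ∈ Finset.Icc 1 k, (((k+1).choose i : ℚ) * bernoulli' (k+1-i)) • ((X:Polynomial ℚ)+1)^i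
      + ∑ i ∈ Finset.Icc 1 k, (((k+1).choose i : ℚ) * bernoulli' (k+1-i)) • (X:Polynomial ℚ)^i := by
  apply Polynomial.funext
  intro t
  simp only [Polynomial.eval_smul, Polynomial.eval_add, Polynomial.eval_sub, Polynomial.eval_mul,
    Polynomial.eval_pow, Polynomial.eval_one, Polynomial.eval_X, Polynomial.eval_finset_sum,
    smul_eq_mul]
  have h := sumIcc k t
  simp_rw [mul_sub, Finset.sum_sub_distrib] at h
  linear_combination h

theorem yxy_pow (K : Type*) (A : Type*) [Field K] [CharZero K] [Ring A] [Algebra K A]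
    (x y : A) (h : x * y - y * x = x) (k : ℕ) (hk : 1 ≤ k) :
    y * x * y ^ k =
      ((k : K) / (k + 1)) • (x * y ^ (k + 1)) + ((1 : K) / (k + 1)) • (y ^ (k + 1) * x) -
      ((1 : K) / (k + 1)) • ∑ i ∈ Finset.Icc 1 k,
        (((k + 1).choose i : K) * algebraMap ℚ K (bernoulli' (k + 1 - i))) • (x * y ^ i) +
      ((1 : K) / (k + 1)) • ∑ i ∈ Finset.Icc 1 k,
        (((k + 1).choose i : K) * algebraMap ℚ K (bernoulli' (k + 1 - i))) • (y ^ i * x) := by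
  -- basic commutation
  have hxy : x * y = (y + 1) * x := by
    rw [sub_eq_iff_eq_add.mp h, add_mul, one_mul, add_comm]
  have hxn : ∀ n : ℕ, x * y ^ n = (y + 1) ^ n * x := by
    intro n
    induction n with
    | zero => simp
    | succ n ih =>
      rw [pow_succ, ← mul_assoc, ih, mul_assoc, hxy, ← mul_assoc, ← pow_succ]
  -- transported polynomial identity
  have key : ((k:A)+1) * (y * (y+1)^k)
      = (k:A) * (y+1)^(k+1) + y^(k+1)
        - ∑ i ∈ Finset.Icc 1 k, ((k+1).choose i : A) *
            ((algebraMap K A) ((algebraMap ℚ K) (bernoulli' (k+1-i))) * (y+1)^i)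
        + ∑ i ∈ Finset.Icc 1 k, ((k+1).choose i : A) *
            ((algebraMap K A) ((algebraMap ℚ K) (bernoulli' (k+1-i))) * y^i) := by
    have hp := polyId k
    simp_rw [Polynomial.smul_eq_C_mul] at hp
    let ψ : Polynomial ℚ →+* A :=
      ((Polynomial.aeval y : Polynomial K →ₐ[K] A) : Polynomial K →+* A).comp
        (Polynomial.mapRingHom (algebraMap ℚ K))
    have ψC : ∀ q : ℚ, ψ (Polynomial.C q) = algebraMap K A (algebraMap ℚ K q) := by
      intro q; simp [ψ]
    have ψX : ψ Polynomial.X = y := by simp [ψ]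
    have h2 := congrArg ψ hp
    simp only [map_add, map_sub, map_mul, map_pow, map_one, map_sum, ψC, ψX,
      map_natCast, mul_assoc] at h2
    exact h2
  -- rewrite all terms into the form (poly in y) * x
  rw [mul_assoc]
  simp only [hxn]
  rw [← mul_assoc]
  simp only [← smul_mul_assoc]
  rw [← Finset.sum_mul, ← Finset.sum_mul]
  simp only [← smul_mul_assoc, ← sub_mul, ← add_mul]
  congr 1
  have hne : ((k:K)+1) ≠ 0 := by
    have : ((k+1 : ℕ) : K) ≠ 0 := Nat.cast_ne_zero.2 (Nat.succ_ne_zero k)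
    push_cast at this; exact this
  apply smul_right_injective A hne
  simp only [smul_add, smul_sub, smul_smul]
  have s1 : ((k:K)+1) * ((k:K)/((k:K)+1)) = (k:K) := by field_simp
  have s2 : ((k:K)+1) * (1/((k:K)+1)) = 1 := by field_simp
  simp only [s1, s2, one_smul]
  simp only [Algebra.smul_def, map_add, map_one, map_mul, map_natCast, mul_assoc]
  exact key
end

section
/- Let A be a K-algebra over a field K of characteristic zero with elements x, y satisfying x*y − y*x = x. Then for every k ≥ 1: y^k*x*y = (1/(k+1))·x*y^{k+1} + (k/(k+1))·y^{k+1}*x + (1/(k+1))·∑_{i=1}^{k} (−1)^{k+1−i} C(k+1,i)·B_{k+1−i}·x*y^i − (1/(k+1))·∑_{i=1}^{k} (−1)^{k+1−i} C(k+1,i)·B_{k+1−i}·y^i*x. -/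
/-!
The relation says `x * y = (1 + y) * x`, hence `x * y ^ i = (1 + y) ^ i * x`, and both sides of
the identity become `q(y) * x` for polynomials `q`. Comparing them reduces the claim to the
difference equation `B_{k+1}(1 + X) - B_{k+1}(X) = (k + 1) X^k` of the Bernoulli polynomials,
once `(-1)^m B'_m = B_m` converts the numbers with `B_1 = 1/2` to those with `B_1 = -1/2`.
-/

open Finset

namespace Polynomial

theorem sum_bernoulli_mul_choose_mul_one_add_X_pow_sub_X_pow (n : ℕ) :
    ∑ i ∈ range (n + 1), C (_root_.bernoulli (n - i) * n.choose i) * ((1 + X) ^ i - X ^ i) =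
      n * X ^ (n - 1) := by
  have h := bernoulli_comp_one_add_X n
  rw [← sub_eq_iff_eq_add', nsmul_eq_mul] at h
  rw [← h, bernoulli_def]
  simp only [← C_mul_X_pow_eq_monomial, sum_comp, mul_comp, C_comp, X_pow_comp, mul_sub,
    sum_sub_distrib]

end Polynomial

section Algebra

variable (K : Type*) {A : Type*} [Field K] [CharZero K] [Ring A] [Algebra K A]

open Polynomial in
theorem sum_bernoulli_mul_choose_smul_one_add_pow_sub_pow (y : A) (n : ℕ) :
    ∑ i ∈ range (n + 1), (algebraMap ℚ K (bernoulli (n - i)) * n.choose i) •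
      ((1 + y) ^ i - y ^ i) = n * y ^ (n - 1) := by
  have h := congr_arg (eval₂RingHom' ((algebraMap K A).comp (algebraMap ℚ K)) y
      fun q => Algebra.commute_algebraMap_left (algebraMap ℚ K q) y)
    (sum_bernoulli_mul_choose_mul_one_add_X_pow_sub_X_pow n)
  simp only [Algebra.smul_def, map_mul, map_natCast]
  simpa only [map_sum, map_mul, map_sub, map_pow, map_add, map_one, map_natCast,
    eval₂RingHom'_apply, eval₂_C, eval₂_X, RingHom.comp_apply] using h

theorem one_add_pow_succ_sub_pow_succ_add_sum_Icc_bernoulli (y : A) (k : ℕ) :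
    (1 + y) ^ (k + 1) - y ^ (k + 1) + ∑ i ∈ Icc 1 k,
      (algebraMap ℚ K (bernoulli (k + 1 - i)) * (k + 1).choose i) • ((1 + y) ^ i - y ^ i) =
      ((k : K) + 1) • y ^ k := by
  have h := sum_bernoulli_mul_choose_smul_one_add_pow_sub_pow K y (k + 1)
  rw [sum_range_succ, range_eq_Ico, sum_eq_sum_Ico_succ_bot k.succ_pos,
    ← Nat.add_one, Ico_add_one_right_eq_Icc] at h
  simp only [pow_zero, sub_self, smul_zero, zero_add, Nat.sub_self, _root_.bernoulli_zero, map_one,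
    Nat.choose_self, Nat.cast_one, mul_one, one_smul, Nat.add_sub_cancel] at h
  rw [add_comm, h, ← Nat.cast_succ, Nat.cast_smul_eq_nsmul, nsmul_eq_mul]

end Algebra

theorem y_pow_xy_general (K : Type*) (A : Type*) [Field K] [CharZero K] [Ring A] [Algebra K A]
    (x y : A) (h : x * y - y * x = x) (k : ℕ) :
    y ^ k * x * y =
      ((1 : K) / (k + 1)) • (x * y ^ (k + 1)) + ((k : K) / (k + 1)) • (y ^ (k + 1) * x) +
      ((1 : K) / (k + 1)) • ∑ i ∈ Finset.Icc 1 k,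
        ((-1 : K) ^ (k + 1 - i) * ((k + 1).choose i : K) *
            algebraMap ℚ K (bernoulli' (k + 1 - i))) • (x * y ^ i) -
      ((1 : K) / (k + 1)) • ∑ i ∈ Finset.Icc 1 k,
        ((-1 : K) ^ (k + 1 - i) * ((k + 1).choose i : K) *
            algebraMap ℚ K (bernoulli' (k + 1 - i))) • (y ^ i * x) := by
  have hxy : SemiconjBy x y (1 + y) := by
    rw [SemiconjBy, add_mul, one_mul]
    exact sub_eq_iff_eq_add.mp h
  have hcoeff : ∀ i, (-1 : K) ^ (k + 1 - i) * ((k + 1).choose i : K) *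
      algebraMap ℚ K (bernoulli' (k + 1 - i)) =
      algebraMap ℚ K (bernoulli (k + 1 - i)) * (k + 1).choose i := fun i => by
    simp only [bernoulli, map_mul, map_pow, map_neg, map_one]
    ring
  have key := one_add_pow_succ_sub_pow_succ_add_sum_Icc_bernoulli K y k
  simp only [hcoeff, (hxy.pow_right _).eq, ← smul_mul_assoc, ← sum_mul, ← add_mul, ← sub_mul]
  rw [mul_assoc, hxy.eq, ← mul_assoc]
  congr 1
  rw [add_sub_assoc, ← smul_sub, ← sum_sub_distrib]
  simp only [← smul_sub]
  rw [eq_sub_of_add_eq' key, mul_add, mul_one, ← pow_succ]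
  have hk : (k : K) + 1 ≠ 0 := Nat.cast_add_one_ne_zero k
  match_scalars
  all_goals field_simp
  ring

theorem y_pow_xy (K : Type*) (A : Type*) [Field K] [CharZero K] [Ring A] [Algebra K A]
    (x y : A) (h : x * y - y * x = x) (k : ℕ) (hk : 1 ≤ k) :
    y ^ k * x * y =
      ((1 : K) / (k + 1)) • (x * y ^ (k + 1)) + ((k : K) / (k + 1)) • (y ^ (k + 1) * x) +
      ((1 : K) / (k + 1)) • ∑ i ∈ Finset.Icc 1 k,
        ((-1 : K) ^ (k + 1 - i) * ((k + 1).choose i : K) *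
            algebraMap ℚ K (bernoulli' (k + 1 - i))) • (x * y ^ i) -
      ((1 : K) / (k + 1)) • ∑ i ∈ Finset.Icc 1 k,
        ((-1 : K) ^ (k + 1 - i) * ((k + 1).choose i : K) *
            algebraMap ℚ K (bernoulli' (k + 1 - i))) • (y ^ i * x) :=
  y_pow_xy_general K A x y h k
end
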